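/- Let a, x₅, y₅ ∈ ℝ³. Define c = (a₁(a₂−a₃), a₂(a₃−a₁), a₃(a₁−a₂)) ∈ ℝ³ and d = (a₁·y₅,₁·(a₂x₅,₃ − a₃x₅,₂), a₂·y₅,₂·(a₃x₅,₁ − a₁x₅,₃), a₃·y₅,₃·(a₁x₅,₂ − a₂x₅,₁)) ∈ ℝ³, and set v = c × d. Assume v ≠ 0. If b, b′ ∈ ℝ³ each have all three coordinates nonzero and both satisfy e₄ᵀ·diag(a)·[a⊙b]_×·diag(b)·e₄ = 0 and y₅ᵀ·diag(a)·[a⊙b]_×·diag(b)·x₅ = 0 (and the same two equations with b replaced by b′), then b ∼ b′; indeed both are nonzero scalar multiples of (v₂v₃, v₁v₃, v₁v₂). -/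

import Mathlib

open Matrix

/-- `u ∼ v`: the vectors are equal up to a nonzero real scalar. -/
def Sim {k : ℕ} (u v : Fin k → ℝ) : Prop := ∃ c : ℝ, c ≠ 0 ∧ u = c • v

/-- The cross product on ℝ³. -/
def cross3 (u v : Fin 3 → ℝ) : Fin 3 → ℝ :=
  ![u 1 * v 2 - u 2 * v 1, u 2 * v 0 - u 0 * v 2, u 0 * v 1 - u 1 * v 0]

/-- The 3×3 skew-symmetric matrix `[v]ₓ` of the cross product: `[v]ₓ · u = v × u`. -/
def crossMat (v : Fin 3 → ℝ) : Matrix (Fin 3) (Fin 3) ℝ :=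
  !![0, -v 2, v 1; v 2, 0, -v 0; -v 1, v 0, 0]

/-!
Expanding the epipolar form gives `yᵀ diag(a) [a⊙b]ₓ diag(b) x = b^∨ ⬝ (a ⊙ y ⊙ (a × x))`, where
`b^∨ = (b₂b₃, b₁b₃, b₁b₂)` is the image of `b` under the standard quadratic Cremona map. Since
`c = a ⊙ (a × e₄)` and `d = a ⊙ y₅ ⊙ (a × x₅)`, the two conditions say that `b^∨` is orthogonal
to `c` and `d`; as `c × d ≠ 0`, this forces `b^∨ ∼ c × d = v`. The Cremona map is an involution
up to scalars, `(b^∨)^∨ = b₁b₂b₃ · b`, so applying it once more gives `b ∼ v^∨`.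
-/

section Cremona

variable {R : Type*} [CommRing R]

def cremona (b : Fin 3 → R) : Fin 3 → R := ![b 1 * b 2, b 0 * b 2, b 0 * b 1]

theorem cremona_smul (μ : R) (b : Fin 3 → R) : cremona (μ • b) = μ ^ 2 • cremona b := by
  ext i; fin_cases i <;> simp [cremona] <;> ring

theorem cremona_cremona (b : Fin 3 → R) : cremona (cremona b) = (b 0 * b 1 * b 2) • b := by
  ext i; fin_cases i <;> simp [cremona] <;> ring

end Cremona

theorem dotProduct_diagonal_mul_crossMat_mulVec (a b x y : Fin 3 → ℝ) :
    y ⬝ᵥ (diagonal a * crossMat (a * b) * diagonal b) *ᵥ x = cremona b ⬝ᵥ (a * y * a ⨯₃ x) := by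
  simp only [dotProduct, mulVec, diagonal, crossMat, cremona, cross_apply, Fin.sum_univ_three,
    Pi.mul_apply, mul_apply, of_apply, cons_val', cons_val_fin_one, cons_val_zero, cons_val_one,
    cons_val, Fin.isValue, Nat.succ_eq_add_one, Nat.reduceAdd, ite_mul, mul_ite, zero_mul, mul_zero,
    Finset.sum_ite_eq, Finset.sum_ite_eq', Finset.mem_univ, ↓reduceIte]
  ring

theorem exists_eq_smul_cross_of_dotProduct_eq_zero {F : Type*} [Field F] {c d w : Fin 3 → F}
    (hcd : c ⨯₃ d ≠ 0) (hc : w ⬝ᵥ c = 0) (hd : w ⬝ᵥ d = 0) : ∃ μ : F, w = μ • (c ⨯₃ d) := by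
  have hcross : (c ⨯₃ d) ⨯₃ w = 0 := by
    rw [← cross_anticomm, cross_cross_eq_smul_sub_smul', hd, dotProduct_comm c w, hc]
    simp
  have hdep : ¬LinearIndependent F ![c ⨯₃ d, w] := by
    rw [← crossProduct_ne_zero_iff_linearIndependent, not_not]
    exact hcross
  rw [LinearIndependent.pair_iff' hcd] at hdep
  obtain ⟨μ, hμ⟩ := not_forall_not.mp hdep
  exact ⟨μ, hμ.symm⟩

theorem exists_eq_smul_cremona_cross {F : Type*} [Field F] {b c d : Fin 3 → F}
    (hcd : c ⨯₃ d ≠ 0) (hb : ∀ i, b i ≠ 0) (hc : cremona b ⬝ᵥ c = 0) (hd : cremona b ⬝ᵥ d = 0) :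
    ∃ lam : F, lam ≠ 0 ∧ b = lam • cremona (c ⨯₃ d) := by
  obtain ⟨μ, hμ⟩ := exists_eq_smul_cross_of_dotProduct_eq_zero hcd hc hd
  have hμ0 : μ ≠ 0 := by
    rintro rfl
    have h0 := congrFun hμ 0
    simp only [cremona, zero_smul, Pi.zero_apply] at h0
    exact mul_ne_zero (hb 1) (hb 2) h0
  have hprod : b 0 * b 1 * b 2 ≠ 0 := mul_ne_zero (mul_ne_zero (hb 0) (hb 1)) (hb 2)
  have hinv : (b 0 * b 1 * b 2) • b = μ ^ 2 • cremona (c ⨯₃ d) := by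
    rw [← cremona_cremona, hμ, cremona_smul]
  refine ⟨μ ^ 2 / (b 0 * b 1 * b 2), div_ne_zero (pow_ne_zero 2 hμ0) hprod, ?_⟩
  rw [div_eq_inv_mul, mul_smul, ← hinv, smul_smul, inv_mul_cancel₀ hprod, one_smul]

/-- Uniqueness assertion of Theorem 22 (n = 5): once the first camera center
`a` is chosen, the second camera center `b` is uniquely determined (up to a
nonzero scalar) as the fourth intersection point of two conics. -/
theorem five_points_second_center_unique (a x₅ y₅ : Fin 3 → ℝ) :
    let c : Fin 3 → ℝ :=
      ![a 0 * (a 1 - a 2), a 1 * (a 2 - a 0), a 2 * (a 0 - a 1)]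
    let d : Fin 3 → ℝ :=
      ![a 0 * y₅ 0 * (a 1 * x₅ 2 - a 2 * x₅ 1),
        a 1 * y₅ 1 * (a 2 * x₅ 0 - a 0 * x₅ 2),
        a 2 * y₅ 2 * (a 0 * x₅ 1 - a 1 * x₅ 0)]
    let v := cross3 c d
    v ≠ 0 →
    ∀ b b' : Fin 3 → ℝ, (∀ i, b i ≠ 0) → (∀ i, b' i ≠ 0) →
      (fun _ : Fin 3 => (1 : ℝ)) ⬝ᵥ
        (Matrix.diagonal a * crossMat (a * b) * Matrix.diagonal b).mulVec
          (fun _ => (1 : ℝ)) = 0 →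
      y₅ ⬝ᵥ (Matrix.diagonal a * crossMat (a * b) * Matrix.diagonal b).mulVec x₅ = 0 →
      (fun _ : Fin 3 => (1 : ℝ)) ⬝ᵥ
        (Matrix.diagonal a * crossMat (a * b') * Matrix.diagonal b').mulVec
          (fun _ => (1 : ℝ)) = 0 →
      y₅ ⬝ᵥ (Matrix.diagonal a * crossMat (a * b') * Matrix.diagonal b').mulVec x₅ = 0 →
      (∃ lam : ℝ, lam ≠ 0 ∧ b = lam • ![v 1 * v 2, v 0 * v 2, v 0 * v 1]) ∧
      (∃ lam : ℝ, lam ≠ 0 ∧ b' = lam • ![v 1 * v 2, v 0 * v 2, v 0 * v 1]) ∧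
      Sim b b' := by
  intro c d v hv
  have hc : a * (fun _ => 1) * a ⨯₃ (fun _ => 1) = c := by
    ext i; fin_cases i <;> simp [c, cross_apply]
  have hd : a * y₅ * a ⨯₃ x₅ = d := by
    ext i; fin_cases i <;> rfl
  have center : ∀ b : Fin 3 → ℝ, (∀ i, b i ≠ 0) →
      (fun _ : Fin 3 => (1 : ℝ)) ⬝ᵥ
        (diagonal a * crossMat (a * b) * diagonal b).mulVec (fun _ => 1) = 0 →
      y₅ ⬝ᵥ (diagonal a * crossMat (a * b) * diagonal b).mulVec x₅ = 0 →
      ∃ lam : ℝ, lam ≠ 0 ∧ b = lam • cremona v := by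
    intro b hb h₁ h₅
    rw [dotProduct_diagonal_mul_crossMat_mulVec, hc] at h₁
    rw [dotProduct_diagonal_mul_crossMat_mulVec, hd] at h₅
    exact exists_eq_smul_cremona_cross hv hb h₁ h₅
  intro b b' hb hb' h₁ h₅ h₁' h₅'
  obtain ⟨lam, hlam, rfl⟩ := center b hb h₁ h₅
  obtain ⟨lam', hlam', rfl⟩ := center b' hb' h₁' h₅'
  refine ⟨⟨lam, hlam, rfl⟩, ⟨lam', hlam', rfl⟩, lam / lam', div_ne_zero hlam hlam', ?_⟩
  rw [smul_smul, div_mul_cancel₀ _ hlam']
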